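/- arXiv:0811.1658 — 2 statements merged into one kernel-verified Lean document; each statement's English description precedes it below -/
import Mathlib

section
/- Suppose U is connected. Then the following are equivalent: (i) the connection ∇^N (Christoffel symbols Γ^∇_i := blockdiag(0, 2Ŝ_i), Γ^∇_{i'} := [[0,0],[2Ŝ_i,0]]) is flat, i.e. its curvature R^∇_{IJ} vanishes identically; (iii) the data is special real, i.e. ∂_i ∂_j g = 0 on U for all i, j. Moreover, the (0,3)-tensor T(e_I; e_J, e_K) := ∂_I G_{JK} − G(Γ^∇_I e_J, e_K) − G(e_J, Γ^∇_I e_K) (i.e. ∇^N G) is totally symmetric in I, J, K; hence (N, G, ∇^N) is Hessian if and only if ∇^N is flat, if and only if the data is special real. -/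
open Matrix

noncomputable section

/-- Partial derivative of a function on `ℝⁿ` in the `i`-th coordinate direction. -/
def pd {n : ℕ} (i : Fin n) (f : (Fin n → ℝ) → ℝ) (x : Fin n → ℝ) : ℝ :=
  fderiv ℝ f x (Pi.single i 1)

/-- Entrywise partial derivative of a matrix-valued map on `ℝⁿ`. -/
def mpd {n : ℕ} (i : Fin n) (F : (Fin n → ℝ) → Matrix (Fin n) (Fin n) ℝ)
    (x : Fin n → ℝ) : Matrix (Fin n) (Fin n) ℝ :=
  Matrix.of fun a b => pd i (fun y => F y a b) x

/-- Hessian metric data on a set `U ⊆ ℝⁿ`: a smooth symmetric invertible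
matrix-valued map whose cubic form `S_{ijk} = ∂_k g_{ij}` is totally symmetric. -/
structure HessianData (n : ℕ) (U : Set (Fin n → ℝ))
    (g : (Fin n → ℝ) → Matrix (Fin n) (Fin n) ℝ) : Prop where
  isOpen : IsOpen U
  smooth : ∀ i j, ContDiffOn ℝ (⊤ : ℕ∞) (fun x => g x i j) U
  symm : ∀ x ∈ U, (g x).IsSymm
  invertible : ∀ x ∈ U, IsUnit (g x).det
  cubic_symm : ∀ x ∈ U, ∀ i j k : Fin n,
    pd k (fun y => g y i j) x = pd j (fun y => g y i k) x

/-- `Ŝᵢ(x) = ½ g(x)⁻¹ ∂ᵢ g(x)`. -/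
def Shat {n : ℕ} (g : (Fin n → ℝ) → Matrix (Fin n) (Fin n) ℝ)
    (i : Fin n) (x : Fin n → ℝ) : Matrix (Fin n) (Fin n) ℝ :=
  (2⁻¹ : ℝ) • ((g x)⁻¹ * mpd i g x)

/-- The `I`-th standard basis vector of `ℝ^{2n} = ℝⁿ × ℝⁿ`, indexed by `Fin n ⊕ Fin n`
(horizontal indices `inl i`, vertical indices `inr i'`). -/
def eN {n : ℕ} : Fin n ⊕ Fin n → (Fin n → ℝ) × (Fin n → ℝ)
  | .inl i => (Pi.single i 1, 0)
  | .inr i => (0, Pi.single i 1)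

/-- Partial derivative on `N ⊆ ℝ^{2n}` in the `I`-th coordinate direction. -/
def pdN {n : ℕ} (I : Fin n ⊕ Fin n) (f : (Fin n → ℝ) × (Fin n → ℝ) → ℝ)
    (p : (Fin n → ℝ) × (Fin n → ℝ)) : ℝ :=
  fderiv ℝ f p (eN I)

/-- Entrywise partial derivative of a matrix-valued map on `N ⊆ ℝ^{2n}`. -/
def mpdN {n : ℕ} (I : Fin n ⊕ Fin n)
    (F : (Fin n → ℝ) × (Fin n → ℝ) → Matrix (Fin n ⊕ Fin n) (Fin n ⊕ Fin n) ℝ)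
    (p : (Fin n → ℝ) × (Fin n → ℝ)) : Matrix (Fin n ⊕ Fin n) (Fin n ⊕ Fin n) ℝ :=
  Matrix.of fun A B => pdN I (fun q => F q A B) p

/-- The metric `G(x,u) = blockdiag(g(x), g(x))` on `N = U × ℝⁿ`. -/
def GN {n : ℕ} (g : (Fin n → ℝ) → Matrix (Fin n) (Fin n) ℝ)
    (p : (Fin n → ℝ) × (Fin n → ℝ)) : Matrix (Fin n ⊕ Fin n) (Fin n ⊕ Fin n) ℝ :=
  Matrix.fromBlocks (g p.1) 0 0 (g p.1)

/-- Curvature `R_{IJ} = ∂_I Γ_J − ∂_J Γ_I + Γ_I Γ_J − Γ_J Γ_I` of a connection on `N`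
given by Christoffel symbols `Γ`. -/
def Riem {n : ℕ}
    (Γ : Fin n ⊕ Fin n → (Fin n → ℝ) × (Fin n → ℝ) → Matrix (Fin n ⊕ Fin n) (Fin n ⊕ Fin n) ℝ)
    (I J : Fin n ⊕ Fin n) (p : (Fin n → ℝ) × (Fin n → ℝ)) :
    Matrix (Fin n ⊕ Fin n) (Fin n ⊕ Fin n) ℝ :=
  mpdN I (Γ J) p - mpdN J (Γ I) p + Γ I p * Γ J p - Γ J p * Γ I p

/-- Christoffel symbols of the special connection `∇^N` on `N`:
`Γ^∇_i = blockdiag(0, 2Ŝᵢ)`, `Γ^∇_{i'} = [[0,0],[2Ŝᵢ,0]]`. -/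
def GammaNb {n : ℕ} (g : (Fin n → ℝ) → Matrix (Fin n) (Fin n) ℝ) :
    Fin n ⊕ Fin n → (Fin n → ℝ) × (Fin n → ℝ) → Matrix (Fin n ⊕ Fin n) (Fin n ⊕ Fin n) ℝ
  | .inl i => fun p => Matrix.fromBlocks 0 0 0 ((2 : ℝ) • Shat g i p.1)
  | .inr i => fun p => Matrix.fromBlocks 0 0 ((2 : ℝ) • Shat g i p.1) 0

/-- The tensor `∇^N G`:
`T(e_I; e_J, e_K) = ∂_I G_{JK} − G(Γ^∇_I e_J, e_K) − G(e_J, Γ^∇_I e_K)`. -/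
def Ttensor {n : ℕ} (g : (Fin n → ℝ) → Matrix (Fin n) (Fin n) ℝ)
    (p : (Fin n → ℝ) × (Fin n → ℝ)) (I J K : Fin n ⊕ Fin n) : ℝ :=
  pdN I (fun q => GN g q J K) p
    - (GammaNb g I p *ᵥ Pi.single J 1) ⬝ᵥ (GN g p *ᵥ Pi.single K 1)
    - Pi.single J 1 ⬝ᵥ (GN g p *ᵥ (GammaNb g I p *ᵥ Pi.single K 1))

/- ===== auxiliary machinery ===== -/

section AuxCalc

variable {n : ℕ}

lemma pd_congr {i : Fin n} {f f' : (Fin n → ℝ) → ℝ} {x} (h : f =ᶠ[nhds x] f') :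
    pd i f x = pd i f' x := by unfold pd; rw [h.fderiv_eq]

lemma pd_const {i : Fin n} (c : ℝ) (x) : pd i (fun _ => c) x = 0 := by
  simp [pd, fderiv_const]

lemma pd_mul {i : Fin n} {a b : (Fin n → ℝ) → ℝ} {x}
    (ha : DifferentiableAt ℝ a x) (hb : DifferentiableAt ℝ b x) :
    pd i (fun y => a y * b y) x = pd i a x * b x + a x * pd i b x := by
  unfold pd
  rw [fderiv_fun_mul ha hb]
  simp only [ContinuousLinearMap.add_apply, ContinuousLinearMap.smul_apply, smul_eq_mul]
  ring

lemma pd_sum {i : Fin n} {ι : Type*} {s : Finset ι} {f : ι → (Fin n → ℝ) → ℝ} {x}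
    (h : ∀ c ∈ s, DifferentiableAt ℝ (f c) x) :
    pd i (fun y => ∑ c ∈ s, f c y) x = ∑ c ∈ s, pd i (f c) x := by
  unfold pd; rw [fderiv_fun_sum h]; simp

lemma pd_contDiffAt {f : (Fin n → ℝ) → ℝ} {x} (i : Fin n)
    (hf : ContDiffAt ℝ (⊤ : ℕ∞) f x) : ContDiffAt ℝ (⊤ : ℕ∞) (fun y => pd i f y) x :=
  (hf.fderiv_right (by simp)).clm_apply contDiffAt_const

lemma contDiffAt_finset_prod {ι : Type*} (s : Finset ι) (f : ι → (Fin n → ℝ) → ℝ) {x}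
    (h : ∀ c ∈ s, ContDiffAt ℝ (⊤ : ℕ∞) (f c) x) :
    ContDiffAt ℝ (⊤ : ℕ∞) (fun y => ∏ c ∈ s, f c y) x := by
  classical
  induction s using Finset.induction with
  | empty => simpa using contDiffAt_const (c := (1:ℝ))
  | insert _ _ hc ih =>
      simp only [Finset.prod_insert hc]
      exact (h _ (Finset.mem_insert_self _ _)).mul
        (ih fun c hcs => h c (Finset.mem_insert_of_mem hcs))

lemma contDiffAt_det' {M : (Fin n → ℝ) → Matrix (Fin n) (Fin n) ℝ} {x}
    (h : ∀ a b, ContDiffAt ℝ (⊤ : ℕ∞) (fun y => M y a b) x) :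
    ContDiffAt ℝ (⊤ : ℕ∞) (fun y => (M y).det) x := by
  have e : (fun y => (M y).det)
      = fun y => ∑ σ : Equiv.Perm (Fin n), (Equiv.Perm.sign σ : ℝ) * ∏ i, M y (σ i) i := by
    funext y; rw [Matrix.det_apply']
  rw [e]
  exact ContDiffAt.sum fun σ _ =>
    (contDiffAt_const).mul (contDiffAt_finset_prod _ _ fun c _ => h _ _)

lemma inv_entry_contDiffAt {g : (Fin n → ℝ) → Matrix (Fin n) (Fin n) ℝ} {U : Set (Fin n → ℝ)}
    (hU : IsOpen U) (hsm : ∀ a b, ∀ x ∈ U, ContDiffAt ℝ (⊤ : ℕ∞) (fun y => g y a b) x)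
    (hdet : ∀ x ∈ U, IsUnit (g x).det) {x} (hx : x ∈ U) (a b : Fin n) :
    ContDiffAt ℝ (⊤ : ℕ∞) (fun y => (g y)⁻¹ a b) x := by
  have hdetc : ContDiffAt ℝ (⊤ : ℕ∞) (fun y => (g y).det) x :=
    contDiffAt_det' (fun a b => hsm a b x hx)
  have hadj : ContDiffAt ℝ (⊤ : ℕ∞) (fun y => (g y).adjugate a b) x := by
    have e : (fun y => (g y).adjugate a b)
        = fun y => ((g y).updateRow b (Pi.single a 1)).det := by
      funext y; rw [Matrix.adjugate_apply]
    rw [e]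
    apply contDiffAt_det'
    intro c d
    rcases eq_or_ne c b with rfl | hc
    · simpa [Matrix.updateRow_self] using contDiffAt_const (c := (Pi.single a 1 : Fin n → ℝ) d)
    · simpa [Matrix.updateRow_ne hc] using hsm c d x hx
  have key : ∀ y ∈ U, (g y)⁻¹ a b = ((g y).det)⁻¹ * (g y).adjugate a b := by
    intro y hy
    rw [Matrix.inv_def, Matrix.smul_apply, Ring.inverse_eq_inv, smul_eq_mul]
  exact ((hdetc.inv (hdet x hx).ne_zero).mul hadj).congr_of_eventuallyEq
    (Filter.eventuallyEq_of_mem (hU.mem_nhds hx) key)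

lemma mpd_mul {i : Fin n} {F H : (Fin n → ℝ) → Matrix (Fin n) (Fin n) ℝ} {x}
    (hF : ∀ a b, DifferentiableAt ℝ (fun y => F y a b) x)
    (hH : ∀ a b, DifferentiableAt ℝ (fun y => H y a b) x) :
    mpd i (fun y => F y * H y) x = mpd i F x * H x + F x * mpd i H x := by
  ext a b
  simp only [mpd, Matrix.of_apply, Matrix.add_apply, Matrix.mul_apply]
  rw [pd_sum (f := fun c y => F y a c * H y c b) (fun c _ => (hF a c).mul (hH c b)), ← Finset.sum_add_distrib]
  congr 1; funext c
  rw [pd_mul (hF a c) (hH c b)]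

lemma mpd_inv {i : Fin n} {g : (Fin n → ℝ) → Matrix (Fin n) (Fin n) ℝ} {U : Set (Fin n → ℝ)}
    (hU : IsOpen U) (hdet : ∀ x ∈ U, IsUnit (g x).det)
    (hgd : ∀ a b, ∀ x ∈ U, DifferentiableAt ℝ (fun y => g y a b) x)
    (hid : ∀ a b, ∀ x ∈ U, DifferentiableAt ℝ (fun y => (g y)⁻¹ a b) x)
    {x} (hx : x ∈ U) :
    mpd i (fun y => (g y)⁻¹) x = -((g x)⁻¹ * mpd i g x * (g x)⁻¹) := by
  have h0 : mpd i (fun y => (g y)⁻¹ * g y) x = 0 := by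
    ext a b
    have he : (fun y => ((g y)⁻¹ * g y) a b)
        =ᶠ[nhds x] (fun _ => (1 : Matrix (Fin n) (Fin n) ℝ) a b) := by
      filter_upwards [hU.mem_nhds hx] with y hy
      rw [Matrix.nonsing_inv_mul _ (hdet y hy)]
    simp only [mpd, Matrix.of_apply, Matrix.zero_apply]
    rw [pd_congr he, pd_const]
  rw [mpd_mul (fun a b => hid a b x hx) (fun a b => hgd a b x hx)] at h0
  have h1 : mpd i (fun y => (g y)⁻¹) x * g x = -((g x)⁻¹ * mpd i g x) :=
    eq_neg_of_add_eq_zero_left h0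
  calc mpd i (fun y => (g y)⁻¹) x
      = mpd i (fun y => (g y)⁻¹) x * (g x * (g x)⁻¹) := by
        rw [Matrix.mul_nonsing_inv _ (hdet x hx), mul_one]
    _ = (mpd i (fun y => (g y)⁻¹) x * g x) * (g x)⁻¹ := by rw [mul_assoc]
    _ = -((g x)⁻¹ * mpd i g x * (g x)⁻¹) := by rw [h1]; simp [mul_assoc]

lemma pdN_fst_inl {f : (Fin n → ℝ) → ℝ} {p : (Fin n → ℝ) × (Fin n → ℝ)} (i : Fin n)
    (hf : DifferentiableAt ℝ f p.1) :
    pdN (Sum.inl i) (fun q => f q.1) p = pd i f p.1 := by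
  have h : HasFDerivAt (fun q : (Fin n → ℝ) × (Fin n → ℝ) => f q.1)
      ((fderiv ℝ f p.1).comp (ContinuousLinearMap.fst ℝ (Fin n → ℝ) (Fin n → ℝ))) p :=
    hf.hasFDerivAt.comp p (hasFDerivAt_fst)
  unfold pdN pd
  rw [h.fderiv]
  rfl

lemma pdN_fst_inr {f : (Fin n → ℝ) → ℝ} {p : (Fin n → ℝ) × (Fin n → ℝ)} (i : Fin n)
    (hf : DifferentiableAt ℝ f p.1) :
    pdN (Sum.inr i) (fun q => f q.1) p = 0 := by
  have h : HasFDerivAt (fun q : (Fin n → ℝ) × (Fin n → ℝ) => f q.1)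
      ((fderiv ℝ f p.1).comp (ContinuousLinearMap.fst ℝ (Fin n → ℝ) (Fin n → ℝ))) p :=
    hf.hasFDerivAt.comp p (hasFDerivAt_fst)
  unfold pdN
  rw [h.fderiv]
  show fderiv ℝ f p.1 (eN (Sum.inr i)).1 = 0
  simp [eN]

end AuxCalc
/- ===== Hessian-data specific machinery ===== -/

/-- `Bmx g j x = g⁻¹ ∂ⱼg = 2 Ŝⱼ`. -/
def Bmx {n : ℕ} (g : (Fin n → ℝ) → Matrix (Fin n) (Fin n) ℝ) (j : Fin n)
    (x : Fin n → ℝ) : Matrix (Fin n) (Fin n) ℝ :=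
  (g x)⁻¹ * mpd j g x

/-- second-derivative matrix `∂ᵢ∂ⱼ g`. -/
def Hmx {n : ℕ} (g : (Fin n → ℝ) → Matrix (Fin n) (Fin n) ℝ) (i j : Fin n)
    (x : Fin n → ℝ) : Matrix (Fin n) (Fin n) ℝ :=
  mpd i (fun y => mpd j g y) x

section HD

variable {n : ℕ} {U : Set (Fin n → ℝ)} {g : (Fin n → ℝ) → Matrix (Fin n) (Fin n) ℝ}

lemma two_smul_Shat (g : (Fin n → ℝ) → Matrix (Fin n) (Fin n) ℝ) (j : Fin n) (y) :
    (2 : ℝ) • Shat g j y = Bmx g j y := by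
  rw [Shat, smul_smul, Bmx]
  norm_num

lemma HDgc (hg : HessianData n U g) {x} (hx : x ∈ U) (a b : Fin n) :
    ContDiffAt ℝ (⊤ : ℕ∞) (fun y => g y a b) x :=
  (hg.smooth a b).contDiffAt (hg.isOpen.mem_nhds hx)

lemma HDgd (hg : HessianData n U g) {x} (hx : x ∈ U) (a b : Fin n) :
    DifferentiableAt ℝ (fun y => g y a b) x :=
  (HDgc hg hx a b).differentiableAt (by simp)

lemma HDpdd (hg : HessianData n U g) {x} (hx : x ∈ U) (j a b : Fin n) :
    DifferentiableAt ℝ (fun y => pd j (fun z => g z a b) y) x :=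
  (pd_contDiffAt j (HDgc hg hx a b)).differentiableAt (by simp)

lemma HDinvd (hg : HessianData n U g) {x} (hx : x ∈ U) (a b : Fin n) :
    DifferentiableAt ℝ (fun y => (g y)⁻¹ a b) x :=
  (inv_entry_contDiffAt hg.isOpen (fun a b x hx => HDgc hg hx a b)
    hg.invertible hx a b).differentiableAt (by simp)

lemma HDBd (hg : HessianData n U g) {x} (hx : x ∈ U) (j a b : Fin n) :
    DifferentiableAt ℝ (fun y => Bmx g j y a b) x := by
  have e : (fun y => Bmx g j y a b)
      = fun y => ∑ c, (g y)⁻¹ a c * pd j (fun z => g z c b) y := by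
    funext y
    simp [Bmx, Matrix.mul_apply, mpd]
  rw [e]
  exact DifferentiableAt.fun_sum fun c _ => (HDinvd hg hx a c).mul (HDpdd hg hx j c b)

lemma HDmpdB (hg : HessianData n U g) {x} (hx : x ∈ U) (i j : Fin n) :
    mpd i (Bmx g j) x = -(Bmx g i x * Bmx g j x) + (g x)⁻¹ * Hmx g i j x := by
  have h1 : mpd i (fun y => (g y)⁻¹ * mpd j g y) x
      = mpd i (fun y => (g y)⁻¹) x * mpd j g x + (g x)⁻¹ * mpd i (fun y => mpd j g y) x :=
    mpd_mul (fun a b => HDinvd hg hx a b) (fun a b => HDpdd hg hx j a b)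
  have h2 : mpd i (fun y => (g y)⁻¹) x = -((g x)⁻¹ * mpd i g x * (g x)⁻¹) :=
    mpd_inv hg.isOpen hg.invertible (fun a b x hx => HDgd hg hx a b)
      (fun a b x hx => HDinvd hg hx a b) hx
  show mpd i (fun y => (g y)⁻¹ * mpd j g y) x = _
  rw [h1, h2]
  show _ = -((g x)⁻¹ * mpd i g x * ((g x)⁻¹ * mpd j g x)) + (g x)⁻¹ * Hmx g i j x
  rw [Hmx]
  noncomm_ring

/-- symmetry of `∂ᵢ g`. -/
lemma HDmpd_symm (hg : HessianData n U g) {x} (hx : x ∈ U) (i : Fin n) :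
    (mpd i g x)ᵀ = mpd i g x := by
  ext a b
  show pd i (fun y => g y b a) x = pd i (fun y => g y a b) x
  apply pd_congr
  filter_upwards [hg.isOpen.mem_nhds hx] with y hy
  exact (hg.symm y hy).apply a b

lemma HDginv_symm (hg : HessianData n U g) {x} (hx : x ∈ U) :
    ((g x)⁻¹)ᵀ = (g x)⁻¹ := by
  rw [Matrix.transpose_nonsing_inv, (hg.symm x hx).eq]

lemma HDBT_mul (hg : HessianData n U g) {x} (hx : x ∈ U) (i : Fin n) :
    (Bmx g i x)ᵀ * g x = mpd i g x := by
  rw [Bmx, Matrix.transpose_mul, HDmpd_symm hg hx, HDginv_symm hg hx, mul_assoc,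
    Matrix.nonsing_inv_mul _ (hg.invertible x hx), mul_one]

lemma HDmul_B (hg : HessianData n U g) {x} (hx : x ∈ U) (i : Fin n) :
    g x * Bmx g i x = mpd i g x := by
  rw [Bmx, ← mul_assoc, Matrix.mul_nonsing_inv _ (hg.invertible x hx), one_mul]

end HD

/- ===== block derivative lemmas on N ===== -/

section BlockN

variable {n : ℕ} {U : Set (Fin n → ℝ)} {g : (Fin n → ℝ) → Matrix (Fin n) (Fin n) ℝ}

lemma mpd_const_zero {n : ℕ} (i : Fin n) (x : Fin n → ℝ) :
    mpd i (fun _ => (0 : Matrix (Fin n) (Fin n) ℝ)) x = 0 := by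
  ext a b
  exact pd_const 0 x

lemma mpdN_fromBlocks_inl {P Q R S : (Fin n → ℝ) → Matrix (Fin n) (Fin n) ℝ}
    {p : (Fin n → ℝ) × (Fin n → ℝ)} (i : Fin n)
    (hP : ∀ a b, DifferentiableAt ℝ (fun y => P y a b) p.1)
    (hQ : ∀ a b, DifferentiableAt ℝ (fun y => Q y a b) p.1)
    (hR : ∀ a b, DifferentiableAt ℝ (fun y => R y a b) p.1)
    (hS : ∀ a b, DifferentiableAt ℝ (fun y => S y a b) p.1) :
    mpdN (Sum.inl i) (fun q => Matrix.fromBlocks (P q.1) (Q q.1) (R q.1) (S q.1)) p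
      = Matrix.fromBlocks (mpd i P p.1) (mpd i Q p.1) (mpd i R p.1) (mpd i S p.1) := by
  ext A B
  rcases A with a | a <;> rcases B with b | b
  · exact pdN_fst_inl i (hP a b)
  · exact pdN_fst_inl i (hQ a b)
  · exact pdN_fst_inl i (hR a b)
  · exact pdN_fst_inl i (hS a b)

lemma mpdN_fromBlocks_inr {P Q R S : (Fin n → ℝ) → Matrix (Fin n) (Fin n) ℝ}
    {p : (Fin n → ℝ) × (Fin n → ℝ)} (i : Fin n)
    (hP : ∀ a b, DifferentiableAt ℝ (fun y => P y a b) p.1)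
    (hQ : ∀ a b, DifferentiableAt ℝ (fun y => Q y a b) p.1)
    (hR : ∀ a b, DifferentiableAt ℝ (fun y => R y a b) p.1)
    (hS : ∀ a b, DifferentiableAt ℝ (fun y => S y a b) p.1) :
    mpdN (Sum.inr i) (fun q => Matrix.fromBlocks (P q.1) (Q q.1) (R q.1) (S q.1)) p = 0 := by
  ext A B
  rcases A with a | a <;> rcases B with b | b
  · exact pdN_fst_inr i (hP a b)
  · exact pdN_fst_inr i (hQ a b)
  · exact pdN_fst_inr i (hR a b)
  · exact pdN_fst_inr i (hS a b)

lemma GammaNb_inl_eq (g : (Fin n → ℝ) → Matrix (Fin n) (Fin n) ℝ) (j : Fin n) :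
    GammaNb g (Sum.inl j)
      = fun q : (Fin n → ℝ) × (Fin n → ℝ) =>
        Matrix.fromBlocks ((fun _ => (0 : Matrix (Fin n) (Fin n) ℝ)) q.1)
          ((fun _ => (0 : Matrix (Fin n) (Fin n) ℝ)) q.1)
          ((fun _ => (0 : Matrix (Fin n) (Fin n) ℝ)) q.1) (Bmx g j q.1) := by
  funext q
  show Matrix.fromBlocks 0 0 0 ((2:ℝ) • Shat g j q.1) = _
  rw [two_smul_Shat]

lemma GammaNb_inr_eq (g : (Fin n → ℝ) → Matrix (Fin n) (Fin n) ℝ) (j : Fin n) :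
    GammaNb g (Sum.inr j)
      = fun q : (Fin n → ℝ) × (Fin n → ℝ) =>
        Matrix.fromBlocks ((fun _ => (0 : Matrix (Fin n) (Fin n) ℝ)) q.1)
          ((fun _ => (0 : Matrix (Fin n) (Fin n) ℝ)) q.1)
          (Bmx g j q.1) ((fun _ => (0 : Matrix (Fin n) (Fin n) ℝ)) q.1) := by
  funext q
  show Matrix.fromBlocks 0 0 ((2:ℝ) • Shat g j q.1) 0 = _
  rw [two_smul_Shat]

lemma mpdN_Gamma_ll (hg : HessianData n U g) {p : (Fin n → ℝ) × (Fin n → ℝ)}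
    (hp : p.1 ∈ U) (i j : Fin n) :
    mpdN (Sum.inl i) (GammaNb g (Sum.inl j)) p
      = Matrix.fromBlocks 0 0 0 (mpd i (Bmx g j) p.1) := by
  rw [GammaNb_inl_eq,
    mpdN_fromBlocks_inl (P := (fun _ => (0 : Matrix (Fin n) (Fin n) ℝ))) (Q := (fun _ => (0 : Matrix (Fin n) (Fin n) ℝ))) (R := (fun _ => (0 : Matrix (Fin n) (Fin n) ℝ))) (S := Bmx g j) i
      (fun a b => differentiableAt_const _)
      (fun a b => differentiableAt_const _) (fun a b => differentiableAt_const _)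
      (fun a b => HDBd hg hp j a b),
    mpd_const_zero]

lemma mpdN_Gamma_lr (hg : HessianData n U g) {p : (Fin n → ℝ) × (Fin n → ℝ)}
    (hp : p.1 ∈ U) (i j : Fin n) :
    mpdN (Sum.inl i) (GammaNb g (Sum.inr j)) p
      = Matrix.fromBlocks 0 0 (mpd i (Bmx g j) p.1) 0 := by
  rw [GammaNb_inr_eq,
    mpdN_fromBlocks_inl (P := (fun _ => (0 : Matrix (Fin n) (Fin n) ℝ))) (Q := (fun _ => (0 : Matrix (Fin n) (Fin n) ℝ))) (R := Bmx g j) (S := (fun _ => (0 : Matrix (Fin n) (Fin n) ℝ))) i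
      (fun a b => differentiableAt_const _)
      (fun a b => differentiableAt_const _) (fun a b => HDBd hg hp j a b)
      (fun a b => differentiableAt_const _),
    mpd_const_zero]

lemma mpdN_Gamma_rl (hg : HessianData n U g) {p : (Fin n → ℝ) × (Fin n → ℝ)}
    (hp : p.1 ∈ U) (i j : Fin n) :
    mpdN (Sum.inr i) (GammaNb g (Sum.inl j)) p = 0 := by
  rw [GammaNb_inl_eq]
  exact mpdN_fromBlocks_inr (P := (fun _ => (0 : Matrix (Fin n) (Fin n) ℝ))) (Q := (fun _ => (0 : Matrix (Fin n) (Fin n) ℝ))) (R := (fun _ => (0 : Matrix (Fin n) (Fin n) ℝ))) (S := Bmx g j) i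
    (fun a b => differentiableAt_const _)
    (fun a b => differentiableAt_const _) (fun a b => differentiableAt_const _)
    (fun a b => HDBd hg hp j a b)

lemma mpdN_Gamma_rr (hg : HessianData n U g) {p : (Fin n → ℝ) × (Fin n → ℝ)}
    (hp : p.1 ∈ U) (i j : Fin n) :
    mpdN (Sum.inr i) (GammaNb g (Sum.inr j)) p = 0 := by
  rw [GammaNb_inr_eq]
  exact mpdN_fromBlocks_inr (P := (fun _ => (0 : Matrix (Fin n) (Fin n) ℝ))) (Q := (fun _ => (0 : Matrix (Fin n) (Fin n) ℝ))) (R := Bmx g j) (S := (fun _ => (0 : Matrix (Fin n) (Fin n) ℝ))) i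
    (fun a b => differentiableAt_const _)
    (fun a b => differentiableAt_const _) (fun a b => HDBd hg hp j a b)
    (fun a b => differentiableAt_const _)

lemma mpdN_GN_inl (hg : HessianData n U g) {p : (Fin n → ℝ) × (Fin n → ℝ)}
    (hp : p.1 ∈ U) (i : Fin n) :
    mpdN (Sum.inl i) (GN g) p
      = Matrix.fromBlocks (mpd i g p.1) 0 0 (mpd i g p.1) := by
  have e : GN g = fun q : (Fin n → ℝ) × (Fin n → ℝ) =>
      Matrix.fromBlocks (g q.1) ((fun _ => (0 : Matrix (Fin n) (Fin n) ℝ)) q.1)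
        ((fun _ => (0 : Matrix (Fin n) (Fin n) ℝ)) q.1) (g q.1) := rfl
  rw [e, mpdN_fromBlocks_inl (P := g) (Q := (fun _ => (0 : Matrix (Fin n) (Fin n) ℝ))) (R := (fun _ => (0 : Matrix (Fin n) (Fin n) ℝ))) (S := g) i
    (fun a b => HDgd hg hp a b)
    (fun a b => differentiableAt_const _) (fun a b => differentiableAt_const _)
    (fun a b => HDgd hg hp a b), mpd_const_zero]

lemma mpdN_GN_inr (hg : HessianData n U g) {p : (Fin n → ℝ) × (Fin n → ℝ)}
    (hp : p.1 ∈ U) (i : Fin n) :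
    mpdN (Sum.inr i) (GN g) p = 0 := by
  have e : GN g = fun q : (Fin n → ℝ) × (Fin n → ℝ) =>
      Matrix.fromBlocks (g q.1) ((fun _ => (0 : Matrix (Fin n) (Fin n) ℝ)) q.1)
        ((fun _ => (0 : Matrix (Fin n) (Fin n) ℝ)) q.1) (g q.1) := rfl
  rw [e]
  exact mpdN_fromBlocks_inr (P := g) (Q := (fun _ => (0 : Matrix (Fin n) (Fin n) ℝ))) (R := (fun _ => (0 : Matrix (Fin n) (Fin n) ℝ))) (S := g) i
    (fun a b => HDgd hg hp a b)
    (fun a b => differentiableAt_const _) (fun a b => differentiableAt_const _)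
    (fun a b => HDgd hg hp a b)

end BlockN

/- ===== curvature computations ===== -/

section RiemCalc

variable {n : ℕ} {U : Set (Fin n → ℝ)} {g : (Fin n → ℝ) → Matrix (Fin n) (Fin n) ℝ}

lemma GammaNb_inl_apply (g : (Fin n → ℝ) → Matrix (Fin n) (Fin n) ℝ) (i : Fin n)
    (p : (Fin n → ℝ) × (Fin n → ℝ)) :
    GammaNb g (Sum.inl i) p = Matrix.fromBlocks 0 0 0 (Bmx g i p.1) := by
  show Matrix.fromBlocks 0 0 0 ((2:ℝ) • Shat g i p.1) = _
  rw [two_smul_Shat]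

lemma GammaNb_inr_apply (g : (Fin n → ℝ) → Matrix (Fin n) (Fin n) ℝ) (i : Fin n)
    (p : (Fin n → ℝ) × (Fin n → ℝ)) :
    GammaNb g (Sum.inr i) p = Matrix.fromBlocks 0 0 (Bmx g i p.1) 0 := by
  show Matrix.fromBlocks 0 0 ((2:ℝ) • Shat g i p.1) 0 = _
  rw [two_smul_Shat]

lemma Riem_ll (hg : HessianData n U g) {p : (Fin n → ℝ) × (Fin n → ℝ)}
    (hp : p.1 ∈ U) (i j : Fin n) :
    Riem (GammaNb g) (Sum.inl i) (Sum.inl j) p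
      = Matrix.fromBlocks 0 0 0
          ((g p.1)⁻¹ * Hmx g i j p.1 - (g p.1)⁻¹ * Hmx g j i p.1) := by
  rw [Riem, mpdN_Gamma_ll hg hp i j, mpdN_Gamma_ll hg hp j i, HDmpdB hg hp i j,
    HDmpdB hg hp j i, GammaNb_inl_apply, GammaNb_inl_apply]
  simp only [Matrix.fromBlocks_multiply, mul_zero, zero_mul, add_zero, zero_add,
    sub_eq_add_neg, Matrix.fromBlocks_neg, Matrix.fromBlocks_add, neg_zero]
  ext A B
  rcases A with a | a <;> rcases B with b | b <;>
    · simp only [Matrix.fromBlocks_apply₁₁, Matrix.fromBlocks_apply₁₂,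
        Matrix.fromBlocks_apply₂₁, Matrix.fromBlocks_apply₂₂, Matrix.add_apply,
        Matrix.neg_apply, Matrix.zero_apply, Matrix.sub_apply]
      try ring

lemma Riem_lr (hg : HessianData n U g) {p : (Fin n → ℝ) × (Fin n → ℝ)}
    (hp : p.1 ∈ U) (i j : Fin n) :
    Riem (GammaNb g) (Sum.inl i) (Sum.inr j) p
      = Matrix.fromBlocks 0 0 ((g p.1)⁻¹ * Hmx g i j p.1) 0 := by
  rw [Riem, mpdN_Gamma_lr hg hp i j, mpdN_Gamma_rl hg hp j i, HDmpdB hg hp i j,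
    GammaNb_inl_apply, GammaNb_inr_apply]
  simp only [Matrix.fromBlocks_multiply, mul_zero, zero_mul, add_zero, zero_add,
    sub_eq_add_neg, Matrix.fromBlocks_neg, Matrix.fromBlocks_add, neg_zero]
  ext A B
  rcases A with a | a <;> rcases B with b | b <;>
    · simp only [Matrix.fromBlocks_apply₁₁, Matrix.fromBlocks_apply₁₂,
        Matrix.fromBlocks_apply₂₁, Matrix.fromBlocks_apply₂₂, Matrix.add_apply,
        Matrix.neg_apply, Matrix.zero_apply, Matrix.sub_apply]
      try ring

lemma Riem_rl (hg : HessianData n U g) {p : (Fin n → ℝ) × (Fin n → ℝ)}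
    (hp : p.1 ∈ U) (i j : Fin n) :
    Riem (GammaNb g) (Sum.inr i) (Sum.inl j) p
      = Matrix.fromBlocks 0 0 (-((g p.1)⁻¹ * Hmx g j i p.1)) 0 := by
  rw [Riem, mpdN_Gamma_rl hg hp i j, mpdN_Gamma_lr hg hp j i, HDmpdB hg hp j i,
    GammaNb_inl_apply, GammaNb_inr_apply]
  simp only [Matrix.fromBlocks_multiply, mul_zero, zero_mul, add_zero, zero_add,
    sub_eq_add_neg, Matrix.fromBlocks_neg, Matrix.fromBlocks_add, neg_zero]
  ext A B
  rcases A with a | a <;> rcases B with b | b <;>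
    · simp only [Matrix.fromBlocks_apply₁₁, Matrix.fromBlocks_apply₁₂,
        Matrix.fromBlocks_apply₂₁, Matrix.fromBlocks_apply₂₂, Matrix.add_apply,
        Matrix.neg_apply, Matrix.zero_apply, Matrix.sub_apply]
      try ring

lemma Riem_rr (hg : HessianData n U g) {p : (Fin n → ℝ) × (Fin n → ℝ)}
    (hp : p.1 ∈ U) (i j : Fin n) :
    Riem (GammaNb g) (Sum.inr i) (Sum.inr j) p = 0 := by
  rw [Riem, mpdN_Gamma_rr hg hp i j, mpdN_Gamma_rr hg hp j i,
    GammaNb_inr_apply, GammaNb_inr_apply]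
  simp only [Matrix.fromBlocks_multiply, mul_zero, zero_mul, add_zero, zero_add,
    Matrix.fromBlocks_zero]
  simp

end RiemCalc

/- ===== Ttensor computations ===== -/

section TtensorCalc

variable {n : ℕ} {U : Set (Fin n → ℝ)} {g : (Fin n → ℝ) → Matrix (Fin n) (Fin n) ℝ}

lemma Ttensor_red (g : (Fin n → ℝ) → Matrix (Fin n) (Fin n) ℝ)
    (p : (Fin n → ℝ) × (Fin n → ℝ)) (I J K : Fin n ⊕ Fin n) :
    Ttensor g p I J K = pdN I (fun q => GN g q J K) p
      - ((GammaNb g I p)ᵀ * GN g p) J K - (GN g p * GammaNb g I p) J K := by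
  rw [Ttensor]
  congr 1
  · congr 1
    simp [Matrix.mulVec_single, dotProduct, Matrix.mul_apply,
      Matrix.transpose_apply, mul_one, mul_comm]
  · rw [Matrix.mulVec_mulVec]
    simp [Matrix.mulVec_single, single_dotProduct, mul_one]

lemma GTG_inl (hg : HessianData n U g) {p : (Fin n → ℝ) × (Fin n → ℝ)}
    (hp : p.1 ∈ U) (i : Fin n) :
    (GammaNb g (Sum.inl i) p)ᵀ * GN g p = Matrix.fromBlocks 0 0 0 (mpd i g p.1) := by
  rw [GammaNb_inl_apply, GN, Matrix.fromBlocks_transpose]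
  simp only [Matrix.fromBlocks_multiply, Matrix.transpose_zero, mul_zero, zero_mul,
    add_zero, zero_add]
  rw [HDBT_mul hg hp i]

lemma GGamma_inl (hg : HessianData n U g) {p : (Fin n → ℝ) × (Fin n → ℝ)}
    (hp : p.1 ∈ U) (i : Fin n) :
    GN g p * GammaNb g (Sum.inl i) p = Matrix.fromBlocks 0 0 0 (mpd i g p.1) := by
  rw [GammaNb_inl_apply, GN]
  simp only [Matrix.fromBlocks_multiply, mul_zero, zero_mul, add_zero, zero_add]
  rw [HDmul_B hg hp i]

lemma GTG_inr (hg : HessianData n U g) {p : (Fin n → ℝ) × (Fin n → ℝ)}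
    (hp : p.1 ∈ U) (i : Fin n) :
    (GammaNb g (Sum.inr i) p)ᵀ * GN g p = Matrix.fromBlocks 0 (mpd i g p.1) 0 0 := by
  rw [GammaNb_inr_apply, GN, Matrix.fromBlocks_transpose]
  simp only [Matrix.fromBlocks_multiply, Matrix.transpose_zero, mul_zero, zero_mul,
    add_zero, zero_add]
  rw [HDBT_mul hg hp i]

lemma GGamma_inr (hg : HessianData n U g) {p : (Fin n → ℝ) × (Fin n → ℝ)}
    (hp : p.1 ∈ U) (i : Fin n) :
    GN g p * GammaNb g (Sum.inr i) p = Matrix.fromBlocks 0 0 (mpd i g p.1) 0 := by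
  rw [GammaNb_inr_apply, GN]
  simp only [Matrix.fromBlocks_multiply, mul_zero, zero_mul, add_zero, zero_add]
  rw [HDmul_B hg hp i]

lemma Ttensor_inl (hg : HessianData n U g) {p : (Fin n → ℝ) × (Fin n → ℝ)}
    (hp : p.1 ∈ U) (i : Fin n) (J K : Fin n ⊕ Fin n) :
    Ttensor g p (Sum.inl i) J K
      = Matrix.fromBlocks (mpd i g p.1) 0 0 (-(mpd i g p.1)) J K := by
  have e1 : pdN (Sum.inl i) (fun q => GN g q J K) p
      = Matrix.fromBlocks (mpd i g p.1) 0 0 (mpd i g p.1) J K :=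
    congrFun (congrFun (mpdN_GN_inl hg hp i) J) K
  rw [Ttensor_red, e1, GTG_inl hg hp i, GGamma_inl hg hp i]
  rcases J with a | a <;> rcases K with b | b <;>
    · simp only [Matrix.fromBlocks_apply₁₁, Matrix.fromBlocks_apply₁₂,
        Matrix.fromBlocks_apply₂₁, Matrix.fromBlocks_apply₂₂, Matrix.zero_apply,
        Matrix.neg_apply]
      try ring

lemma Ttensor_inr (hg : HessianData n U g) {p : (Fin n → ℝ) × (Fin n → ℝ)}
    (hp : p.1 ∈ U) (i : Fin n) (J K : Fin n ⊕ Fin n) :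
    Ttensor g p (Sum.inr i) J K
      = Matrix.fromBlocks 0 (-(mpd i g p.1)) (-(mpd i g p.1)) 0 J K := by
  have e1 : pdN (Sum.inr i) (fun q => GN g q J K) p
      = (0 : Matrix (Fin n ⊕ Fin n) (Fin n ⊕ Fin n) ℝ) J K :=
    congrFun (congrFun (mpdN_GN_inr hg hp i) J) K
  rw [Ttensor_red, e1, GTG_inr hg hp i, GGamma_inr hg hp i]
  rcases J with a | a <;> rcases K with b | b <;>
    · simp only [Matrix.fromBlocks_apply₁₁, Matrix.fromBlocks_apply₁₂,
        Matrix.fromBlocks_apply₂₁, Matrix.fromBlocks_apply₂₂, Matrix.zero_apply,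
        Matrix.neg_apply]
      try ring

/-- entry symmetry of `∂ᵢg`. -/
lemma gSymA (hg : HessianData n U g) {x} (hx : x ∈ U) (k a b : Fin n) :
    mpd k g x a b = mpd k g x b a :=
  congrFun (congrFun (HDmpd_symm hg hx k) b) a

/-- total symmetry: swap derivative index with first entry index. -/
lemma gSymB (hg : HessianData n U g) {x} (hx : x ∈ U) (i a b : Fin n) :
    mpd i g x a b = mpd a g x i b := by
  have h1 : pd i (fun y => g y a b) x = pd b (fun y => g y a i) x :=
    hg.cubic_symm x hx a b i
  have h2 : pd b (fun y => g y a i) x = pd b (fun y => g y i a) x :=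
    congrFun (congrFun (HDmpd_symm hg hx b) i) a
  have h3 : pd a (fun y => g y i b) x = pd b (fun y => g y i a) x :=
    hg.cubic_symm x hx i b a
  exact (h1.trans h2).trans h3.symm

end TtensorCalc

/-- for Hessian metric data on a connected open set `U`, the tensor
`∇^N G` is always totally symmetric, and `∇^N` is flat if and only if the data is
special real (`∂ᵢ∂ⱼ g = 0` on `U`); hence `(N,G,∇^N)` is Hessian iff `∇^N` is flat
iff the data is special real. -/
theorem stmt_14 {n : ℕ} (hn : 1 ≤ n) (U : Set (Fin n → ℝ)) (hUconn : IsConnected U)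
    (g : (Fin n → ℝ) → Matrix (Fin n) (Fin n) ℝ)
    (hg : HessianData n U g) :
    (∀ p ∈ U ×ˢ (Set.univ : Set (Fin n → ℝ)), ∀ I J K : Fin n ⊕ Fin n,
      Ttensor g p I J K = Ttensor g p I K J ∧
      Ttensor g p I J K = Ttensor g p J I K) ∧
    ((∀ p ∈ U ×ˢ (Set.univ : Set (Fin n → ℝ)), ∀ I J : Fin n ⊕ Fin n,
        Riem (GammaNb g) I J p = 0) ↔
      (∀ x ∈ U, ∀ i j a b : Fin n,
        pd i (fun y => pd j (fun z => g z a b) y) x = 0)) := by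
  constructor
  · intro p hp I J K
    have hp1 : p.1 ∈ U := hp.1
    have S1 := gSymA hg hp1
    have S2 := gSymB hg hp1
    rcases I with i | i <;> rcases J with a | a <;> rcases K with b | b <;>
      refine ⟨?_, ?_⟩ <;>
      simp only [Ttensor_inl hg hp1, Ttensor_inr hg hp1, Matrix.fromBlocks_apply₁₁,
        Matrix.fromBlocks_apply₁₂, Matrix.fromBlocks_apply₂₁, Matrix.fromBlocks_apply₂₂,
        Matrix.neg_apply, Matrix.zero_apply, neg_inj] <;>
      first
        | rfl
        | exact S1 _ _ _
        | exact S2 _ _ _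
  · constructor
    · intro hflat x hx i j a b
      have h := hflat (x, 0) ⟨hx, trivial⟩ (Sum.inl i) (Sum.inr j)
      rw [Riem_lr hg hx i j] at h
      have h2 : (g x)⁻¹ * Hmx g i j x = 0 := by
        ext c d
        simpa using congrFun (congrFun h (Sum.inr c)) (Sum.inl d)
      have h3 : Hmx g i j x = 0 := by
        have h4 := congrArg (fun M => g x * M) h2
        simpa [← mul_assoc, Matrix.mul_nonsing_inv _ (hg.invertible x hx)] using h4
      exact congrFun (congrFun h3 a) b
    · intro hss p hp I J
      have hp1 : p.1 ∈ U := hp.1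
      have hH : ∀ i j : Fin n, Hmx g i j p.1 = 0 := by
        intro i j; ext a b; exact hss p.1 hp1 i j a b
      rcases I with i | i <;> rcases J with j | j
      · rw [Riem_ll hg hp1 i j]; simp [hH, Matrix.fromBlocks_zero]
      · rw [Riem_lr hg hp1 i j]; simp [hH, Matrix.fromBlocks_zero]
      · rw [Riem_rl hg hp1 i j]; simp [hH, Matrix.fromBlocks_zero]
      · exact Riem_rr hg hp1 i j
end
end

section
/- Let h : ℝⁿ → ℝ be a homogeneous cubic polynomial (n ≥ 1), g := Hess h, and let x ∈ ℝⁿ be a point where g(x) is invertible. Then Σ_i x^i ∂_i ∂_j ∂_k h(x) = g_{jk}(x) for all j, k; hence Ŝ_x := Σ_i x^i Ŝ_i(x) = (1/2)·Id, and the anticommutator Ŝ_x Ŝ_x + Ŝ_x Ŝ_x = (1/2)·Id ≠ 0. Consequently the Levi-Civita curvature of the metric G = blockdiag(g, g) on N = V(x) × ℝⁿ is not identically zero (where V(x) is the connected component of x in {det Hess h ≠ 0}): the pseudo-Kähler manifold obtained by the r-map from a special real manifold with homogeneous cubic potential is never flat. -/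
open Matrix

noncomputable section

/-- Christoffel symbols of the Levi-Civita connection of `G` on `N`:
`Γ_i = blockdiag(Ŝᵢ, Ŝᵢ)`, `Γ_{i'} = [[0, −Ŝᵢ],[Ŝᵢ, 0]]`. -/
def GammaLC {n : ℕ} (g : (Fin n → ℝ) → Matrix (Fin n) (Fin n) ℝ) :
    Fin n ⊕ Fin n → (Fin n → ℝ) × (Fin n → ℝ) → Matrix (Fin n ⊕ Fin n) (Fin n ⊕ Fin n) ℝ
  | .inl i => fun p => Matrix.fromBlocks (Shat g i p.1) 0 0 (Shat g i p.1)
  | .inr i => fun p => Matrix.fromBlocks 0 (-(Shat g i p.1)) (Shat g i p.1) 0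


attribute [local instance] Matrix.linftyOpNormedRing Matrix.linftyOpNormedAlgebra

section Aux

variable {n : ℕ}

abbrev prj (i : Fin n) : (Fin n → ℝ) →L[ℝ] ℝ := ContinuousLinearMap.proj i

lemma pd_eq {f : (Fin n → ℝ) → ℝ} {L : (Fin n → ℝ) →L[ℝ] ℝ} {x} (hf : HasFDerivAt f L x)
    (i : Fin n) : pd i f x = L (Pi.single i 1) := by rw [pd, hf.fderiv]

lemma hasF_proj (q : Fin n) (x : Fin n → ℝ) : HasFDerivAt (fun y : Fin n → ℝ => y q) (prj q) x :=
  (prj q).hasFDerivAt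

lemma pd_lin (A : Fin n → ℝ) (i : Fin n) (x : Fin n → ℝ) :
    pd i (fun y => ∑ q, A q * y q) x = A i := by
  have h : HasFDerivAt (fun y : Fin n → ℝ => ∑ q, A q * y q) (∑ q, A q • prj q) x :=
    HasFDerivAt.fun_sum fun q _ => (hasF_proj q x).const_mul (A q)
  rw [pd_eq h i]
  simp [Pi.single_apply]

lemma pd_quad (B : Fin n → Fin n → ℝ) (i : Fin n) (x : Fin n → ℝ) :
    pd i (fun y => ∑ p, ∑ q, B p q * y p * y q) x
      = (∑ q, B i q * x q) + ∑ p, B p i * x p := by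
  have h : HasFDerivAt (fun y : Fin n → ℝ => ∑ p, ∑ q, B p q * y p * y q)
      (∑ p, ∑ q, ((B p q * x p) • prj q + x q • (B p q • prj p))) x :=
    HasFDerivAt.fun_sum fun p _ => HasFDerivAt.fun_sum fun q _ =>
      ((hasF_proj p x).const_mul (B p q)).mul (hasF_proj q x)
  rw [pd_eq h i]
  simp [Pi.single_apply, Finset.sum_add_distrib, mul_ite, ite_and, mul_comm]
  rw [add_comm]

lemma pd_cubic (c : Fin n → Fin n → Fin n → ℝ) (a : Fin n) (x : Fin n → ℝ) :
    pd a (fun y => ∑ i, ∑ j, ∑ k, c i j k * y i * y j * y k) x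
      = ∑ p, ∑ q, (c a p q + c p a q + c p q a) * x p * x q := by
  have h : HasFDerivAt (fun y : Fin n → ℝ => ∑ i, ∑ j, ∑ k, c i j k * y i * y j * y k)
      (∑ i, ∑ j, ∑ k, (((c i j k * x i) * x j) • prj k +
        x k • ((c i j k * x i) • prj j + x j • (c i j k • prj i)))) x :=
    HasFDerivAt.fun_sum fun i _ => HasFDerivAt.fun_sum fun j _ => HasFDerivAt.fun_sum fun k _ =>
      (((hasF_proj i x).const_mul (c i j k)).mul (hasF_proj j x)).mul (hasF_proj k x)
  rw [pd_eq h a]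
  simp only [ContinuousLinearMap.sum_apply, ContinuousLinearMap.smul_apply,
    ContinuousLinearMap.add_apply, ContinuousLinearMap.proj_apply, Pi.single_apply,
    Finset.sum_add_distrib, mul_ite, mul_one, mul_zero, smul_eq_mul, ite_mul, zero_mul,
    Finset.sum_ite_eq', Finset.mem_univ, if_true, add_mul]
  simp only [mul_add, mul_ite, mul_zero, Finset.sum_ite_irrel, Finset.sum_const_zero,
    Finset.sum_add_distrib, Finset.sum_ite_eq', Finset.mem_univ, if_true]
  have e1 : (∑ x_1 : Fin n, ∑ x_2 : Fin n, x x_2 * (x x_1 * c a x_1 x_2))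
      = ∑ p, ∑ q, c a p q * x p * x q :=
    Finset.sum_congr rfl fun p _ => Finset.sum_congr rfl fun q _ => by ring
  have e2 : (∑ x_1 : Fin n, ∑ x_2 : Fin n, x x_2 * (c x_1 a x_2 * x x_1))
      = ∑ p, ∑ q, c p a q * x p * x q :=
    Finset.sum_congr rfl fun p _ => Finset.sum_congr rfl fun q _ => by ring
  have e3 : (∑ x_1 : Fin n, ∑ x_2 : Fin n, c x_1 x_2 a * x x_1 * x x_2)
      = ∑ p, ∑ q, c p q a * x p * x q :=
    Finset.sum_congr rfl fun p _ => Finset.sum_congr rfl fun q _ => by ring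
  rw [e1, e2, e3]
  ring

def dd (c : Fin n → Fin n → Fin n → ℝ) (a p q : Fin n) : ℝ := c a p q + c p a q + c p q a
def ee (c : Fin n → Fin n → Fin n → ℝ) (a b q : Fin n) : ℝ := dd c a b q + dd c a q b

variable {h : (Fin n → ℝ) → ℝ} {c : Fin n → Fin n → Fin n → ℝ}

lemma pd_h (hcubic : ∀ y : Fin n → ℝ, h y = ∑ i, ∑ j, ∑ k, c i j k * y i * y j * y k)
    (a : Fin n) (y : Fin n → ℝ) : pd a h y = ∑ p, ∑ q, dd c a p q * y p * y q := by
  have hh : h = fun y => ∑ i, ∑ j, ∑ k, c i j k * y i * y j * y k := funext hcubic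
  rw [hh, pd_cubic]
  simp only [dd]

lemma pd_pd_h (hcubic : ∀ y : Fin n → ℝ, h y = ∑ i, ∑ j, ∑ k, c i j k * y i * y j * y k)
    (a b : Fin n) (y : Fin n → ℝ) : pd b (pd a h) y = ∑ q, ee c a b q * y q := by
  have hh : pd a h = fun z => ∑ p, ∑ q, dd c a p q * z p * z q := funext (pd_h hcubic a)
  rw [hh, pd_quad]
  rw [← Finset.sum_add_distrib]
  exact Finset.sum_congr rfl fun q _ => by simp [ee]; ring

lemma pd3 (hcubic : ∀ y : Fin n → ℝ, h y = ∑ i, ∑ j, ∑ k, c i j k * y i * y j * y k)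
    (i j k : Fin n) (x : Fin n → ℝ) : pd i (pd j (pd k h)) x = ee c k j i := by
  have hh : pd j (pd k h) = fun z => ∑ q, ee c k j q * z q := funext (pd_pd_h hcubic k j)
  rw [hh, pd_lin]

lemma pdN_fst (F : (Fin n → ℝ) → ℝ) (I : Fin n ⊕ Fin n) (p : (Fin n → ℝ) × (Fin n → ℝ)) :
    pdN I (fun q => F q.1) p = fderiv ℝ F p.1 (eN I).1 := by
  by_cases hF : DifferentiableAt ℝ F p.1
  · have hc : (fun q : (Fin n → ℝ) × (Fin n → ℝ) => F q.1) = F ∘ Prod.fst := rfl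
    rw [pdN, hc, fderiv_comp (x := p) hF differentiableAt_fst, fderiv_fst]
    rfl
  · have h2 : ¬ DifferentiableAt ℝ (fun q : (Fin n → ℝ) × (Fin n → ℝ) => F q.1) p := fun hq => by
      have hpr : DifferentiableAt ℝ (fun y : Fin n → ℝ => (y, p.2)) p.1 :=
        DifferentiableAt.prodMk differentiableAt_fun_id (differentiableAt_const p.2)
      have := DifferentiableAt.comp (g := fun q : (Fin n → ℝ) × (Fin n → ℝ) => F q.1) p.1 hq hpr
      exact hF this
    rw [pdN, fderiv_zero_of_not_differentiableAt h2, fderiv_zero_of_not_differentiableAt hF]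
    simp

/-- The scaled right-multiplication entry functional `M ↦ ½ (M C)_{ab}` as a CLM. -/
def entryMulCLM (C : Matrix (Fin n) (Fin n) ℝ) (a b : Fin n) :
    Matrix (Fin n) (Fin n) ℝ →L[ℝ] ℝ :=
  LinearMap.toContinuousLinearMap
  { toFun := fun M => (2⁻¹ : ℝ) * ((M * C) a b)
    map_add' := fun M N => by
      simp [Matrix.add_mul, Matrix.add_apply]; ring
    map_smul' := fun r M => by
      simp [Matrix.smul_mul, Matrix.smul_apply, smul_eq_mul]; ring }

lemma entryMulCLM_apply (C : Matrix (Fin n) (Fin n) ℝ) (a b : Fin n)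
    (M : Matrix (Fin n) (Fin n) ℝ) : entryMulCLM C a b M = (2⁻¹ : ℝ) * ((M * C) a b) := rfl

end Aux

/-- for a homogeneous cubic polynomial `h` with `g = Hess h` invertible
at `x`, one has `Σᵢ xⁱ ∂ᵢ∂ⱼ∂ₖ h(x) = g_{jk}(x)`, hence `Ŝ_x = (1/2)·Id` and
`Ŝ_x Ŝ_x + Ŝ_x Ŝ_x = (1/2)·Id ≠ 0`; consequently the Levi-Civita curvature of
`G = blockdiag(g,g)` on `N = V(x) × ℝⁿ` is not identically zero. -/

theorem stmt_17 {n : ℕ} (hn : 1 ≤ n)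
    (h : (Fin n → ℝ) → ℝ) (c : Fin n → Fin n → Fin n → ℝ)
    (hcubic : ∀ y : Fin n → ℝ, h y = ∑ i, ∑ j, ∑ k, c i j k * y i * y j * y k)
    (g : (Fin n → ℝ) → Matrix (Fin n) (Fin n) ℝ)
    (hgdef : ∀ (y : Fin n → ℝ) (i j : Fin n), g y i j = pd i (pd j h) y)
    (x : Fin n → ℝ) (hx : IsUnit ((g x).det)) :
    (∀ j k : Fin n, (∑ i, x i * pd i (pd j (pd k h)) x) = g x j k) ∧
    ((∑ i, x i • Shat g i x) = (2⁻¹ : ℝ) • (1 : Matrix (Fin n) (Fin n) ℝ)) ∧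
    ((∑ i, x i • Shat g i x) * (∑ i, x i • Shat g i x)
        + (∑ i, x i • Shat g i x) * (∑ i, x i • Shat g i x)
      = (2⁻¹ : ℝ) • (1 : Matrix (Fin n) (Fin n) ℝ)) ∧
    ((2⁻¹ : ℝ) • (1 : Matrix (Fin n) (Fin n) ℝ) ≠ 0) ∧
    (∃ p ∈ (connectedComponentIn {y : Fin n → ℝ | IsUnit ((g y).det)} x) ×ˢ
        (Set.univ : Set (Fin n → ℝ)), ∃ I J : Fin n ⊕ Fin n,
      Riem (GammaLC g) I J p ≠ 0) := by
  classical
  have g_lin : ∀ (y : Fin n → ℝ) (a b : Fin n), g y a b = ∑ q, ee c b a q * y q := fun y a b => by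
    rw [hgdef]; exact pd_pd_h hcubic b a y
  set Cm : Fin n → Matrix (Fin n) (Fin n) ℝ := fun q => Matrix.of fun a b => ee c b a q with hCm
  have mpd_eq : ∀ (i : Fin n) (y : Fin n → ℝ), mpd i g y = Cm i := fun i y => by
    ext a b
    show pd i (fun z => g z a b) y = ee c b a i
    have hf : (fun z => g z a b) = fun z => ∑ q, ee c b a q * z q := funext fun z => g_lin z a b
    rw [hf, pd_lin]
  have gsum : ∀ y : Fin n → ℝ, ∑ q, y q • Cm q = g y := fun y => by
    ext a b
    simp [Matrix.sum_apply, hCm, g_lin, mul_comm]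
  have part1 : ∀ j k : Fin n, (∑ i, x i * pd i (pd j (pd k h)) x) = g x j k := fun j k => by
    rw [g_lin x j k]
    exact Finset.sum_congr rfl fun i _ => by rw [pd3 hcubic i j k x]; ring
  have part2 : (∑ i, x i • Shat g i x) = (2⁻¹ : ℝ) • (1 : Matrix (Fin n) (Fin n) ℝ) := by
    have hterm : ∀ i, x i • Shat g i x = (2⁻¹ : ℝ) • ((g x)⁻¹ * (x i • Cm i)) := fun i => by
      rw [Shat, mpd_eq, Matrix.mul_smul, smul_comm]
    rw [Finset.sum_congr rfl fun i _ => hterm i, ← Finset.smul_sum, ← Finset.mul_sum,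
      gsum x, Matrix.nonsing_inv_mul _ hx]
  have part3 : (∑ i, x i • Shat g i x) * (∑ i, x i • Shat g i x)
        + (∑ i, x i • Shat g i x) * (∑ i, x i • Shat g i x)
      = (2⁻¹ : ℝ) • (1 : Matrix (Fin n) (Fin n) ℝ) := by
    rw [part2, Matrix.smul_mul, Matrix.mul_smul, smul_smul, mul_one, ← add_smul]
    norm_num
  have hn0 : 0 < n := hn
  set a0 : Fin n := ⟨0, hn0⟩ with ha0
  have part4 : (2⁻¹ : ℝ) • (1 : Matrix (Fin n) (Fin n) ℝ) ≠ 0 := fun h0 => by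
    have := congrArg (fun M : Matrix (Fin n) (Fin n) ℝ => M a0 a0) h0
    simp [Matrix.smul_apply, Matrix.one_apply] at this
  refine ⟨part1, part2, part3, part4, ?_⟩
  -- derivative machinery for Shat
  have hgu : IsUnit (g x) := (Matrix.isUnit_iff_isUnit_det _).2 hx
  have ucoe : (hgu.unit : Matrix (Fin n) (Fin n) ℝ) = g x := hgu.unit_spec
  have uinv : ((hgu.unit⁻¹ : _ˣ) : Matrix (Fin n) (Fin n) ℝ) = (g x)⁻¹ := by
    rw [Matrix.coe_units_inv, ucoe]
  set Lg : (Fin n → ℝ) →L[ℝ] Matrix (Fin n) (Fin n) ℝ :=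
    ∑ q, (prj q).smulRight (Cm q) with hLg
  have Lg_apply : ∀ v, Lg v = ∑ q, v q • Cm q := fun v => by simp [hLg]
  have hgfun : g = fun y => Lg y := funext fun y => by rw [Lg_apply, gsum]
  have hg_fd : HasFDerivAt g Lg x := hgfun ▸ Lg.hasFDerivAt
  have Lg_single : ∀ i : Fin n, Lg (Pi.single i 1) = Cm i := fun i => by
    rw [Lg_apply]
    simp [Pi.single_apply, ite_smul]
  set D : (Fin n → ℝ) →L[ℝ] Matrix (Fin n) (Fin n) ℝ :=
    (-(ContinuousLinearMap.mulLeftRight ℝ _ ↑hgu.unit⁻¹ ↑hgu.unit⁻¹)).comp Lg with hD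
  have hinv_fd : HasFDerivAt (fun y => Ring.inverse (g y)) D x := by
    have h1 := hasFDerivAt_ringInverse (𝕜 := ℝ) hgu.unit
    rw [ucoe] at h1
    exact h1.comp x hg_fd
  have D_single : ∀ i : Fin n, D (Pi.single i 1) = -((g x)⁻¹ * Cm i * (g x)⁻¹) := fun i => by
    rw [hD]
    show -(((hgu.unit⁻¹ : (Matrix (Fin n) (Fin n) ℝ)ˣ) : Matrix (Fin n) (Fin n) ℝ) * Lg (Pi.single i 1) * ((hgu.unit⁻¹ : (Matrix (Fin n) (Fin n) ℝ)ˣ) : Matrix (Fin n) (Fin n) ℝ)) = _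
    rw [Lg_single, uinv]
  have Phi_fd : ∀ (j a b : Fin n), HasFDerivAt (fun y => Shat g j y a b)
      ((entryMulCLM (Cm j) a b).comp D) x := fun j a b => by
    have hfun : (fun y => Shat g j y a b)
        = fun y => entryMulCLM (Cm j) a b (Ring.inverse (g y)) := funext fun y => by
      rw [Shat, mpd_eq j y, Matrix.nonsing_inv_eq_ringInverse, entryMulCLM_apply]
      simp [Matrix.smul_apply, smul_eq_mul]
    rw [hfun]
    exact (entryMulCLM (Cm j) a b).hasFDerivAt.comp x hinv_fd
  have Shat_prod : ∀ i j : Fin n, Shat g i x * Shat g j x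
      = (4⁻¹ : ℝ) • ((g x)⁻¹ * Cm i * ((g x)⁻¹ * Cm j)) := fun i j => by
    rw [Shat, Shat, mpd_eq, mpd_eq, Matrix.smul_mul, Matrix.mul_smul, smul_smul]
    norm_num
  have Shat_pd : ∀ i j a b : Fin n, pd i (fun y => Shat g j y a b) x
      = ((-2 : ℝ) • (Shat g i x * Shat g j x)) a b := fun i j a b => by
    rw [pd_eq (Phi_fd j a b) i, ContinuousLinearMap.comp_apply, D_single, entryMulCLM_apply,
      Shat_prod]
    simp [Matrix.smul_apply, smul_eq_mul, Matrix.neg_mul, Matrix.neg_apply, Matrix.mul_assoc]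
    ring
  have pdN_inl : ∀ (F : (Fin n → ℝ) → ℝ) (i : Fin n) (p : (Fin n → ℝ) × (Fin n → ℝ)),
      pdN (.inl i) (fun q => F q.1) p = pd i F p.1 := fun F i p => by
    rw [pdN_fst]; rfl
  have pdN_inr0 : ∀ (F : (Fin n → ℝ) → ℝ) (j : Fin n) (p : (Fin n → ℝ) × (Fin n → ℝ)),
      pdN (.inr j) (fun q => F q.1) p = 0 := fun F j p => by
    rw [pdN_fst]
    show fderiv ℝ F p.1 (0 : Fin n → ℝ) = 0
    simp
  have Rentry : ∀ (i j a b : Fin n) (v : Fin n → ℝ),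
      Riem (GammaLC g) (.inl i) (.inr j) (x, v) (.inl a) (.inr b)
        = (Shat g i x * Shat g j x + Shat g j x * Shat g i x) a b := fun i j a b v => by
    have e1 : mpdN (.inl i) (GammaLC g (.inr j)) (x, v) (.inl a) (.inr b)
        = 2 * ((Shat g i x * Shat g j x) a b) := by
      show pdN (.inl i) (fun q => GammaLC g (.inr j) q (.inl a) (.inr b)) (x, v) = _
      have hc : (fun q : (Fin n → ℝ) × (Fin n → ℝ) => GammaLC g (.inr j) q (.inl a) (.inr b))
          = fun q => (fun y => -(Shat g j y a b)) q.1 := by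
        funext q
        simp [GammaLC]
      rw [hc, pdN_inl (fun y => -(Shat g j y a b)) i (x, v),
        pd_eq ((Phi_fd j a b).fun_neg) i, ContinuousLinearMap.neg_apply,
        ← pd_eq (Phi_fd j a b) i, Shat_pd i j a b]
      simp [Matrix.smul_apply]
    have e2 : mpdN (.inr j) (GammaLC g (.inl i)) (x, v) (.inl a) (.inr b) = 0 := by
      show pdN (.inr j) (fun q => GammaLC g (.inl i) q (.inl a) (.inr b)) (x, v) = 0
      have hc : (fun q : (Fin n → ℝ) × (Fin n → ℝ) => GammaLC g (.inl i) q (.inl a) (.inr b))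
          = fun q => (fun _ : Fin n → ℝ => (0 : ℝ)) q.1 := by
        funext q
        simp [GammaLC]
      rw [hc, pdN_inr0 (fun _ => (0:ℝ)) j (x, v)]
    have e3 : (GammaLC g (.inl i) (x, v) * GammaLC g (.inr j) (x, v)) (.inl a) (.inr b)
        = -((Shat g i x * Shat g j x) a b) := by
      simp [GammaLC, Matrix.fromBlocks_multiply]
    have e4 : (GammaLC g (.inr j) (x, v) * GammaLC g (.inl i) (x, v)) (.inl a) (.inr b)
        = -((Shat g j x * Shat g i x) a b) := by
      simp [GammaLC, Matrix.fromBlocks_multiply]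
    show (mpdN (.inl i) (GammaLC g (.inr j)) (x, v) - mpdN (.inr j) (GammaLC g (.inl i)) (x, v)
        + GammaLC g (.inl i) (x, v) * GammaLC g (.inr j) (x, v)
        - GammaLC g (.inr j) (x, v) * GammaLC g (.inl i) (x, v)) (.inl a) (.inr b) = _
    rw [Matrix.sub_apply, Matrix.add_apply, Matrix.sub_apply, e1, e2, e3, e4, Matrix.add_apply]
    ring
  by_contra hcon
  push_neg at hcon
  have hx' : x ∈ connectedComponentIn {y : Fin n → ℝ | IsUnit ((g y).det)} x :=
    mem_connectedComponentIn hx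
  have hz : ∀ i j : Fin n,
      (Shat g i x * Shat g j x + Shat g j x * Shat g i x) a0 a0 = 0 := fun i j => by
    have h0 := hcon (x, 0) ⟨hx', Set.mem_univ _⟩ (.inl i) (.inr j)
    have := congrArg (fun M : Matrix (Fin n ⊕ Fin n) (Fin n ⊕ Fin n) ℝ =>
      M (Sum.inl a0) (Sum.inr a0)) h0
    simpa [Rentry i j a0 a0 0] using this
  have hsum : ∑ i, ∑ j, (x i * x j) * ((Shat g i x * Shat g j x) a0 a0)
      + ∑ i, ∑ j, (x i * x j) * ((Shat g j x * Shat g i x) a0 a0) = 0 := by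
    rw [← Finset.sum_add_distrib]
    refine Finset.sum_eq_zero fun i _ => ?_
    rw [← Finset.sum_add_distrib]
    refine Finset.sum_eq_zero fun j _ => ?_
    have hij := hz i j
    rw [Matrix.add_apply] at hij
    linear_combination (x i * x j) * hij
  have hswap : ∑ i, ∑ j, (x i * x j) * ((Shat g j x * Shat g i x) a0 a0)
      = ∑ i, ∑ j, (x i * x j) * ((Shat g i x * Shat g j x) a0 a0) := by
    rw [Finset.sum_comm]
    exact Finset.sum_congr rfl fun i _ => Finset.sum_congr rfl fun j _ => by ring
  have hAA : ∑ i, ∑ j, (x i * x j) * ((Shat g i x * Shat g j x) a0 a0)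
      = (4⁻¹ : ℝ) := by
    have hprod : (∑ i, x i • Shat g i x) * (∑ j, x j • Shat g j x)
        = (4⁻¹ : ℝ) • (1 : Matrix (Fin n) (Fin n) ℝ) := by
      rw [part2, Matrix.smul_mul, Matrix.mul_smul, smul_smul, mul_one]
      norm_num
    have := congrArg (fun M : Matrix (Fin n) (Fin n) ℝ => M a0 a0) hprod
    simp only [Finset.sum_mul, Finset.mul_sum, Matrix.sum_apply, Matrix.smul_mul,
      Matrix.mul_smul, smul_smul, Matrix.smul_apply, smul_eq_mul, Matrix.one_apply_eq] at this
    norm_num at this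
    rw [← hswap, this]
    norm_num
  rw [hswap, hAA] at hsum
  norm_num at hsum
end
end
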